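/- arXiv:2106.01204 — 3 statements merged into one kernel-verified Lean document; each statement's English description precedes it below -/
import Mathlib

section
/- Let a, b, c be real numbers with a > 1, b > 1, c > 0, and suppose log(b)/log(a) is irrational. Then for every ε > 0 there exist positive integers k, ℓ such that |a^k · b^{-ℓ} − c| < ε. -/
/-- Walk lemma, increasing case: a walk with positive step `θ < δ` eventually
(beyond any index `J`) lands within `δ` of an integer. -/
lemma walk_pos (θ β δ : ℝ) (hθ : 0 < θ) (hθδ : θ < δ) (J : ℕ) :
    ∃ j : ℕ, J < j ∧ ∃ r : ℤ, |(j : ℝ) * θ + β - r| < δ := by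
  set K : ℤ := ⌈(J : ℝ) * θ + β⌉ with hK
  have hex : ∃ j : ℕ, (K : ℝ) < (j : ℝ) * θ + β := by
    obtain ⟨j, hj⟩ := exists_nat_gt (((K : ℝ) - β) / θ)
    exact ⟨j, by have := (div_lt_iff₀ hθ).mp hj; linarith⟩
  classical
  set j0 := Nat.find hex with hj0
  have hmem : (K : ℝ) < (j0 : ℝ) * θ + β := Nat.find_spec hex
  have hJnot : ¬ ((K : ℝ) < (J : ℝ) * θ + β) := not_lt.mpr (Int.le_ceil _)
  have hJlt : J < j0 := by
    by_contra h
    push_neg at h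
    exact hJnot (lt_of_lt_of_le hmem (by
      have : (j0 : ℝ) ≤ (J : ℝ) := by exact_mod_cast h
      nlinarith))
  have hj0pos : 0 < j0 := lt_of_le_of_lt (Nat.zero_le J) hJlt
  have hprev : ¬ ((K : ℝ) < ((j0 - 1 : ℕ) : ℝ) * θ + β) := Nat.find_min hex (by omega)
  push_neg at hprev
  have hcast : ((j0 - 1 : ℕ) : ℝ) = (j0 : ℝ) - 1 := by
    have : (j0 - 1) + 1 = j0 := by omega
    have := congrArg (fun n : ℕ => (n : ℝ)) this
    push_cast at this
    linarith
  rw [hcast] at hprev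
  refine ⟨j0, hJlt, K, ?_⟩
  rw [abs_lt]
  constructor <;> nlinarith

/-- Walk lemma, both signs. -/
lemma walk_gen (θ β δ : ℝ) (hθ : θ ≠ 0) (hθδ : |θ| < δ) (J : ℕ) :
    ∃ j : ℕ, J < j ∧ ∃ r : ℤ, |(j : ℝ) * θ + β - r| < δ := by
  rcases hθ.lt_or_gt with h | h
  · obtain ⟨j, hj, r, hr⟩ := walk_pos (-θ) (-β) δ (by linarith)
      (by rwa [abs_of_neg h] at hθδ) J
    refine ⟨j, hj, -r, ?_⟩
    have : (j : ℝ) * θ + β - (-r : ℤ) = -((j : ℝ) * (-θ) + (-β) - r) := by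
      push_cast; ring
    rw [this, abs_neg]; exact hr
  · exact walk_pos θ β δ h (by rwa [abs_of_pos h] at hθδ) J

/-- Diophantine approximation lemma: for `a, b > 1`, `c > 0` with `log b / log a`
irrational, `a^k * b^(-ℓ)` approximates `c` arbitrarily well with positive integers. -/
theorem dio_approx (a b c : ℝ) (ha : 1 < a) (hb : 1 < b) (hc : 0 < c)
    (hirr : Irrational (Real.log b / Real.log a)) :
    ∀ ε > 0, ∃ k l : ℕ, 0 < k ∧ 0 < l ∧ |a ^ k * (b ^ l)⁻¹ - c| < ε := by
  intro ε hε
  have hla : 0 < Real.log a := Real.log_pos ha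
  have hlb : 0 < Real.log b := Real.log_pos hb
  set α : ℝ := Real.log b / Real.log a with hαdef
  have hα : 0 < α := div_pos hlb hla
  set β : ℝ := Real.log c / Real.log a with hβdef
  -- continuity of exp at log c
  obtain ⟨δ₀, hδ₀, hcont⟩ :=
    Metric.continuousAt_iff.mp (Real.continuous_exp.continuousAt (x := Real.log c)) ε hε
  set δ : ℝ := δ₀ / Real.log a with hδdef
  have hδ : 0 < δ := div_pos hδ₀ hla
  -- Dirichlet: find n ≥ 1 with |nα - m| < δ
  obtain ⟨N, hN⟩ := exists_nat_one_div_lt hδ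
  obtain ⟨n, hn0, _, hdir⟩ :=
    Real.exists_nat_abs_mul_sub_round_le α (n := N + 1) (Nat.succ_pos N)
  set m : ℤ := round ((n : ℝ) * α) with hm
  set θ : ℝ := (n : ℝ) * α - m with hθdef
  have hθδ : |θ| < δ := by
    refine lt_of_le_of_lt hdir ?_
    have h1 : (1 : ℝ) / (↑(N + 1) + 1) ≤ 1 / (↑N + 1) := by
      apply div_le_div_of_nonneg_left one_pos.le (by positivity)
      push_cast; linarith
    linarith
  have hθ0 : θ ≠ 0 := by
    have hirr' : Irrational ((n : ℝ) * α) := hirr.natCast_mul hn0.ne'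
    exact sub_ne_zero.mpr (hirr'.ne_int m)
  -- choose J large enough so k will be positive
  obtain ⟨J, hJ⟩ := exists_nat_gt ((δ - β) / ((n : ℝ) * α))
  obtain ⟨j, hjJ, r, hjr⟩ := walk_gen θ β δ hθ0 hθδ J
  set k : ℤ := (j : ℤ) * m + r with hk
  have hkey : |(k : ℝ) - (j * n : ℕ) * α - β| < δ := by
    have : (k : ℝ) - (j * n : ℕ) * α - β = -((j : ℝ) * θ + β - r) := by
      rw [hk, hθdef]; push_cast; ring
    rw [this, abs_neg]; exact hjr
  -- k is positive
  have hjnα : (δ - β) < (j : ℝ) * ((n : ℝ) * α) := by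
    have hj' : ((J : ℝ)) < (j : ℝ) := by exact_mod_cast hjJ
    have h1 : ((J : ℝ)) * ((n : ℝ) * α) < (j : ℝ) * ((n : ℝ) * α) := by
      apply mul_lt_mul_of_pos_right hj'
      positivity
    have h2 : (δ - β) < (J : ℝ) * ((n : ℝ) * α) := by
      have := (div_lt_iff₀ (by positivity : (0:ℝ) < (n : ℝ) * α)).mp hJ
      linarith
    linarith
  have hkpos : 0 < k := by
    have h1 : (k : ℝ) > (j * n : ℕ) * α + β - δ := by
      have := abs_lt.mp hkey
      linarith [this.1]
    have h2 : (0 : ℝ) < (k : ℝ) := by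
      have : ((j * n : ℕ) : ℝ) * α = (j : ℝ) * ((n : ℝ) * α) := by push_cast; ring
      nlinarith
    exact_mod_cast h2
  refine ⟨k.toNat, j * n, by omega, Nat.mul_pos (by omega) hn0, ?_⟩
  have hktn : ((k.toNat : ℕ) : ℝ) = (k : ℝ) := by
    exact_mod_cast Int.toNat_of_nonneg hkpos.le
  -- rewrite the power expression via exp
  have hrw : a ^ k.toNat * (b ^ (j * n))⁻¹ =
      Real.exp ((k.toNat : ℝ) * Real.log a - ((j * n : ℕ) : ℝ) * Real.log b) := by
    rw [Real.exp_sub, Real.exp_nat_mul, Real.exp_nat_mul, Real.exp_log (by linarith),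
      Real.exp_log (by linarith)]
    ring
  rw [hrw]
  have hclose : dist ((k.toNat : ℝ) * Real.log a - ((j * n : ℕ) : ℝ) * Real.log b)
      (Real.log c) < δ₀ := by
    rw [Real.dist_eq]
    have heq : (k.toNat : ℝ) * Real.log a - ((j * n : ℕ) : ℝ) * Real.log b - Real.log c
        = ((k : ℝ) - (j * n : ℕ) * α - β) * Real.log a := by
      rw [hktn, hαdef, hβdef]
      field_simp
    rw [heq, abs_mul, abs_of_pos hla]
    calc |(k : ℝ) - (j * n : ℕ) * α - β| * Real.log a < δ * Real.log a :=
          mul_lt_mul_of_pos_right hkey hla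
      _ = δ₀ := by rw [hδdef]; field_simp
  have := hcont hclose
  rwa [Real.dist_eq, Real.exp_log hc] at this
end

section
/- For any irrational real number α > 0 and any real β, there exist infinitely many pairs of positive integers (x, y) such that x·|y − αx − β| < 2. -/
/-!
Take a good rational approximation `p/q` of `α`, so `|p - qα| < 1/q`, with `q` large. As `p` is
invertible mod `q`, every window of `q` consecutive integers contains an `x` with
`q ∣ p x + t`, where `t` is the integer nearest to `qβ`. For `y = (p x + t)/q` we get
`q (y - αx - β) = x (p - qα) + (t - qβ)`, of absolute value below `x/q + 1/2`, so
`x |y - αx - β| < 2` as long as `x ≤ 1.1 q`. Since `q` can be taken arbitrarily large, the window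
can start arbitrarily far out, which makes `x` unbounded.
-/

theorem Real.exists_rat_abs_sub_lt_one_div_den_sq_and_lt_den {ξ : ℝ} (hξ : Irrational ξ) (N : ℕ) :
    ∃ q : ℚ, |ξ - q| < 1 / (q.den : ℝ) ^ 2 ∧ N < q.den := by
  obtain ⟨ε, hsep, hε⟩ := ((hξ.eventually_forall_le_dist_cast_rat_of_den_le N).filter_mono
    nhdsWithin_le_nhds |>.and (self_mem_nhdsWithin (s := Set.Ioi (0 : ℝ)))).exists
  obtain ⟨q₀, hq₀, hq₀ξ⟩ := exists_rat_btwn (sub_lt_self ξ hε)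
  obtain ⟨q, hq, hqq₀⟩ := exists_rat_abs_sub_lt_and_lt_of_irrational hξ q₀
  refine ⟨q, hq, not_le.mp fun hden => ?_⟩
  have hεq := hsep q hden
  rw [Real.dist_eq] at hεq
  rw [abs_of_pos (sub_pos.mpr hq₀ξ)] at hqq₀
  linarith

theorem Rat.abs_num_sub_den_mul_lt {ξ : ℝ} {r : ℚ} (h : |ξ - r| < 1 / (r.den : ℝ) ^ 2) :
    |(r.num : ℝ) - r.den * ξ| < 1 / r.den := by
  have hd : (0 : ℝ) < r.den := by exact_mod_cast r.pos
  have hnum : (r.num : ℝ) = r.den * r := by exact_mod_cast r.den_mul_eq_num.symm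
  calc |(r.num : ℝ) - r.den * ξ| = r.den * |ξ - r| := by
        rw [hnum, ← mul_sub, abs_mul, abs_of_pos hd, abs_sub_comm]
    _ < r.den * (1 / (r.den : ℝ) ^ 2) := by gcongr
    _ = 1 / r.den := by field_simp

theorem Int.exists_mem_Ico_dvd_mul_add {p q : ℤ} (hq : 0 < q) (hpq : IsCoprime p q) (t x₀ : ℤ) :
    ∃ x, x₀ ≤ x ∧ x < x₀ + q ∧ q ∣ p * x + t := by
  obtain ⟨u, v, huv⟩ := hpq
  -- `u` inverts `p` mod `q`, so any `x ≡ -t u [ZMOD q]` works.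
  set a := -t * u - x₀
  refine ⟨x₀ + a % q, by linarith [a.emod_nonneg hq.ne'], by linarith [a.emod_lt_of_pos hq],
    t * v - p * (a / q), ?_⟩
  rw [Int.emod_def]
  linear_combination (-t) * huv

theorem exists_mem_Ico_mul_abs_sub_le (α β : ℝ) {p q : ℤ} (hq : 0 < q) (hpq : IsCoprime p q)
    (x₀ : ℤ) : ∃ x y : ℤ, x₀ ≤ x ∧ x < x₀ + q ∧
      q * |y - α * x - β| ≤ |(x : ℝ)| * |p - q * α| + 1 / 2 := by
  set t := round (q * β)
  obtain ⟨x, hx₀, hxq, y, hy⟩ := Int.exists_mem_Ico_dvd_mul_add hq hpq t x₀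
  refine ⟨x, y, hx₀, hxq, ?_⟩
  have hyR : (q : ℝ) * y = p * x + t := by exact_mod_cast hy.symm
  have hq' : (0 : ℝ) < q := by exact_mod_cast hq
  calc (q : ℝ) * |y - α * x - β| = |x * (p - q * α) + (t - q * β)| := by
        rw [← abs_of_pos hq', ← abs_mul, abs_of_pos hq']
        congr 1
        linear_combination hyR
    _ ≤ |x * (p - q * α)| + |t - q * β| := abs_add_le _ _
    _ ≤ |(x : ℝ)| * |p - q * α| + 1 / 2 := by
        rw [abs_mul, abs_sub_comm (t : ℝ)]
        gcongr
        exact abs_sub_round ((q : ℝ) * β)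

theorem exists_nat_gt_mul_abs_sub_lt_two {α : ℝ} (hα : 0 < α) (hirr : Irrational α) (β : ℝ)
    (N : ℕ) : ∃ x y : ℕ, N < x ∧ 0 < y ∧ (x : ℝ) * |(y : ℝ) - α * x - β| < 2 := by
  obtain ⟨K, hNK, hK⟩ : ∃ K : ℕ, N ≤ K ∧ 1 - β ≤ α * K :=
    ⟨max N ⌈(1 - β) / α⌉₊, le_max_left _ _, by
      rw [← div_le_iff₀' hα]
      exact (Nat.le_ceil _).trans (by exact_mod_cast le_max_right _ _)⟩
  obtain ⟨r, hr, hden⟩ :=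
    Real.exists_rat_abs_sub_lt_one_div_den_sq_and_lt_den hirr (10 * (K + 1))
  obtain ⟨x, y, hKx, hxq, hxy⟩ := exists_mem_Ico_mul_abs_sub_le α β
    (Int.natCast_pos.mpr r.pos) r.isCoprime_num_den (K + 1)
  have hKq : 10 * ((K : ℝ) + 1) < r.den := by exact_mod_cast hden
  have hx₀ : (K : ℝ) + 1 ≤ x := by exact_mod_cast hKx
  have hxq' : (x : ℝ) ≤ K + r.den := by exact_mod_cast (by omega : x ≤ K + r.den)
  have hδ := Rat.abs_num_sub_den_mul_lt hr
  set e := |(y : ℝ) - α * x - β|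
  have hd : (0 : ℝ) < r.den := by linarith
  have hx : (0 : ℝ) < x := by linarith
  have he : r.den * e < 8 / 5 := by
    have hxδ : x * |(r.num : ℝ) - r.den * α| < 11 / 10 :=
      calc x * |(r.num : ℝ) - r.den * α| < x * (1 / r.den) := by gcongr
        _ ≤ (K + r.den) * (1 / r.den) := by gcongr
        _ ≤ 11 / 10 := by rw [mul_one_div, div_le_iff₀ hd]; linarith
    rw [Int.cast_natCast, abs_of_pos hx] at hxy
    linarith
  have hprod : x * e < 2 :=
    calc x * e ≤ (11 / 10 * r.den) * e := by gcongr; linarith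
      _ = 11 / 10 * (r.den * e) := by ring
      _ < 2 := by linarith
  have hy : 0 < y := by
    have he₁ : e < 1 := by nlinarith [abs_nonneg ((y : ℝ) - α * x - β)]
    have hlow := neg_abs_le ((y : ℝ) - α * x - β)
    have : α * (K + 1) ≤ α * x := by gcongr
    have : (0 : ℝ) < y := by linarith
    exact_mod_cast this
  lift x to ℕ using by omega
  lift y to ℕ using hy.le
  exact ⟨x, y, by omega, by omega, by simpa [e] using hprod⟩

/-- Tchebychef's inhomogeneous Diophantine approximation theorem: for irrational
`α > 0` and any real `β`, there are infinitely many pairs of positive integers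
`(x, y)` with `x * |y - α x - β| < 2`. -/
theorem tchebychef (α : ℝ) (hα : 0 < α) (hirr : Irrational α) (β : ℝ) :
    {p : ℕ × ℕ | 0 < p.1 ∧ 0 < p.2 ∧
      (p.1 : ℝ) * |(p.2 : ℝ) - α * p.1 - β| < 2}.Infinite := by
  refine Set.Infinite.of_image Prod.fst (Set.infinite_of_not_bddAbove (not_bddAbove_iff.mpr ?_))
  intro N
  obtain ⟨x, y, hNx, hy, hxy⟩ := exists_nat_gt_mul_abs_sub_lt_two hα hirr β N
  exact ⟨x, ⟨(x, y), ⟨by omega, hy, hxy⟩, rfl⟩, hNx⟩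
end

section
/- Let K ⊂ ℝⁿ be a closed cone invariant under a semigroup S_hom of linear maps, and suppose Cu + d ∈ K for all u ∈ Ω. If K is also convex (so K + K ⊂ K), then K is positively invariant for the affine control system ẋ = A(u)x + Cu + d with piecewise constant controls: for piecewise constant u and x ∈ K the solution satisfies φ(t, x, u) ∈ K for all t ≥ 0. -/
/-!
On an interval where the control is constant, equal to `w`, the solution is given by the
variation-of-constants formula
`φ t₁ = e^{(t₁ - t₀) A(w)} φ t₀ + ∫_{t₀}^{t₁} e^{(t₁ - s) A(w)} (C w + d) ds`.
The first term lies in `K` by invariance, and so does the integral: its integrand lies in `K`,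
and a closed convex cone contains the average of any integrable function with values in it,
hence all its positive multiples. A cone that is convex is closed under addition, so
`φ t₁ ∈ K`. Since every control is constant on some interval `[t, t + ε)`, a continuity
argument propagates `φ t ∈ K` from `t = 0` to all `t ≥ 0`.
-/

open NormedSpace MeasureTheory Set Matrix

theorem Convex.add_mem_of_pos_smul_mem {E : Type*} [AddCommGroup E] [Module ℝ E] {K : Set E}
    (hconvex : Convex ℝ K) (hcone : ∀ w ∈ K, ∀ l : ℝ, 0 < l → l • w ∈ K) {x y : E}
    (hx : x ∈ K) (hy : y ∈ K) : x + y ∈ K := by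
  have h := hcone _ (hconvex hx hy (by norm_num : (0 : ℝ) ≤ 1 / 2)
    (by norm_num : (0 : ℝ) ≤ 1 / 2) (by norm_num)) 2 two_pos
  rwa [smul_add, smul_smul, smul_smul, show (2 : ℝ) * (1 / 2) = 1 by norm_num, one_smul,
    one_smul] at h

theorem Convex.intervalIntegral_mem_of_pos_smul_mem {E : Type*} [NormedAddCommGroup E]
    [NormedSpace ℝ E] [CompleteSpace E] {K : Set E} (hclosed : IsClosed K)
    (hconvex : Convex ℝ K) (hcone : ∀ w ∈ K, ∀ l : ℝ, 0 < l → l • w ∈ K) {f : ℝ → E}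
    {a b : ℝ} (hab : a < b) (hf : IntervalIntegrable f volume a b)
    (hmem : ∀ s ∈ Ioc a b, f s ∈ K) : (∫ s in a..b, f s) ∈ K := by
  have hvol : volume (Ioc a b) = ENNReal.ofReal (b - a) := Real.volume_Ioc
  have havg : (⨍ s in Ioc a b, f s) ∈ K :=
    hconvex.set_average_mem hclosed (by simp [hvol, hab]) (by simp [hvol])
      ((ae_restrict_iff' measurableSet_Ioc).2 (.of_forall hmem)) hf.1
  have hint : (∫ s in a..b, f s) = (b - a) • ⨍ s in Ioc a b, f s := by
    rw [setAverage_eq, smul_smul, measureReal_def, hvol,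
      ENNReal.toReal_ofReal (sub_nonneg.2 hab.le), mul_inv_cancel₀ (sub_ne_zero.2 hab.ne'),
      one_smul, intervalIntegral.integral_of_le hab.le]
  rw [hint]
  exact hcone _ havg _ (sub_pos.2 hab)

theorem HasDerivAt.matrix_mulVec {m n : Type*} [Fintype m] [Fintype n]
    {E : ℝ → Matrix m n ℝ} {E' : Matrix m n ℝ} {v : ℝ → n → ℝ} {v' : n → ℝ} {t : ℝ}
    (hE : HasDerivAt E E' t) (hv : HasDerivAt v v' t) :
    HasDerivAt (fun s => E s *ᵥ v s) (E' *ᵥ v t + E t *ᵥ v') t := by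
  -- Any norm on matrices will do to see `mulVec` as a continuous bilinear map.
  open scoped Matrix.Norms.Operator in
  let L : Matrix m n ℝ →L[ℝ] (n → ℝ) →L[ℝ] m → ℝ := LinearMap.toContinuousLinearMap
    (LinearMap.toContinuousLinearMap.toLinearMap ∘ₗ mulVecBilin ℝ ℝ)
  open scoped Matrix.Norms.Operator in
  exact (L.hasFDerivAt.comp_hasDerivAt t hE).clm_apply hv

namespace Matrix

variable {ι : Type*} [Fintype ι] [DecidableEq ι]

theorem hasDerivAt_exp_sub_smul (M : Matrix ι ι ℝ) (t₁ s : ℝ) :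
    HasDerivAt (fun r : ℝ => exp ((t₁ - r) • M)) (-(exp ((t₁ - s) • M) * M)) s := by
  open scoped Matrix.Norms.Operator in
  have h := (hasDerivAt_exp_smul_const M (t₁ - s)).scomp s ((hasDerivAt_id s).const_sub t₁)
  simp only [Function.comp_def, neg_one_smul] at h
  exact h

theorem continuous_exp_sub_smul_mulVec (M : Matrix ι ι ℝ) (t₁ : ℝ) (b : ι → ℝ) :
    Continuous fun s : ℝ => exp ((t₁ - s) • M) *ᵥ b :=
  continuous_iff_continuousAt.2 fun s =>
    ((hasDerivAt_exp_sub_smul M t₁ s).matrix_mulVec (hasDerivAt_const s b)).continuousAt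

theorem eq_exp_mulVec_add_integral_of_hasDerivAt (M : Matrix ι ι ℝ) (b : ι → ℝ)
    {φ : ℝ → ι → ℝ} {t₀ t₁ : ℝ} (h : t₀ ≤ t₁)
    (hφ : ∀ s ∈ Icc t₀ t₁, HasDerivAt φ (M *ᵥ φ s + b) s) :
    φ t₁ = exp ((t₁ - t₀) • M) *ᵥ φ t₀ + ∫ s in t₀..t₁, exp ((t₁ - s) • M) *ᵥ b := by
  have hderiv : ∀ s ∈ uIcc t₀ t₁, HasDerivAt (fun r => exp ((t₁ - r) • M) *ᵥ φ r)
      (exp ((t₁ - s) • M) *ᵥ b) s := by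
    intro s hs
    rw [uIcc_of_le h] at hs
    convert (hasDerivAt_exp_sub_smul M t₁ s).matrix_mulVec (hφ s hs) using 1
    rw [mulVec_add, neg_mulVec, ← mulVec_mulVec]
    abel
  have hftc := intervalIntegral.integral_eq_sub_of_hasDerivAt hderiv
    ((continuous_exp_sub_smul_mulVec M t₁ b).intervalIntegrable _ _)
  rw [hftc]
  simp

theorem mem_of_hasDerivAt_eq_mulVec_add {K : Set (ι → ℝ)} (hclosed : IsClosed K)
    (hconvex : Convex ℝ K) (hcone : ∀ w ∈ K, ∀ l : ℝ, 0 < l → l • w ∈ K)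
    {M : Matrix ι ι ℝ} (hinv : ∀ t : ℝ, 0 ≤ t → ∀ x ∈ K, exp (t • M) *ᵥ x ∈ K)
    {b : ι → ℝ} (hb : b ∈ K) {φ : ℝ → ι → ℝ} {t₀ t₁ : ℝ} (h : t₀ < t₁)
    (hφ : ∀ s ∈ Icc t₀ t₁, HasDerivAt φ (M *ᵥ φ s + b) s) (h₀ : φ t₀ ∈ K) : φ t₁ ∈ K := by
  rw [eq_exp_mulVec_add_integral_of_hasDerivAt M b h.le hφ]
  refine hconvex.add_mem_of_pos_smul_mem hcone (hinv _ (sub_nonneg.2 h.le) _ h₀) ?_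
  exact hconvex.intervalIntegral_mem_of_pos_smul_mem hclosed hcone h
    ((continuous_exp_sub_smul_mulVec M t₁ b).intervalIntegrable _ _)
    fun s hs => hinv _ (sub_nonneg.2 hs.2) _ hb

end Matrix

open Finset in
/-- A closed convex cone `K` which is invariant under the linear semigroup
`e^{tA(u)}`, `u ∈ Ω`, `t ≥ 0`, and with `Cu + d ∈ K` for all `u ∈ Ω`, is positively
invariant for the affine control system with piecewise constant controls. -/
theorem convex_cone_positively_invariant {n m : ℕ}
    (A : Matrix (Fin n) (Fin n) ℝ) (B : Fin m → Matrix (Fin n) (Fin n) ℝ)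
    (c : Fin m → Fin n → ℝ) (d : Fin n → ℝ) (Ω : Set (Fin m → ℝ))
    (K : Set (Fin n → ℝ)) (hclosed : IsClosed K) (hconvex : Convex ℝ K)
    (hcone : ∀ w ∈ K, ∀ l : ℝ, 0 < l → l • w ∈ K)
    (hinvK : ∀ w ∈ Ω, ∀ t : ℝ, 0 ≤ t → ∀ x ∈ K,
      (NormedSpace.exp (t • (A + ∑ i, w i • B i))).mulVec x ∈ K)
    (haff : ∀ w ∈ Ω, ((∑ i, w i • c i) + d) ∈ K)
    (u : ℝ → Fin m → ℝ) (hu : ∀ t, u t ∈ Ω)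
    (hpc : ∀ t ≥ (0 : ℝ), ∃ ε > 0, ∀ s ∈ Set.Ico t (t + ε), u s = u t)
    (x : Fin n → ℝ) (hx : x ∈ K) (φ : ℝ → Fin n → ℝ) (h0 : φ 0 = x)
    (hφ : ∀ t, HasDerivAt φ ((A + ∑ i, u t i • B i).mulVec (φ t)
      + (∑ i, u t i • c i) + d) t) :
    ∀ t ≥ (0 : ℝ), φ t ∈ K := by
  intro T hT
  have hcont : Continuous φ := continuous_iff_continuousAt.2 fun t => (hφ t).continuousAt
  suffices Icc 0 T ⊆ {t | φ t ∈ K} from this ⟨hT, le_rfl⟩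
  refine IsClosed.Icc_subset_of_forall_exists_gt ((hclosed.preimage hcont).inter isClosed_Icc)
    (by simpa [h0]) ?_
  rintro t ⟨htK, ht0, -⟩ y hy
  obtain ⟨ε, hε, hconst⟩ := hpc t ht0
  have hz : t < min (t + ε / 2) y := lt_min (by linarith) hy
  refine ⟨min (t + ε / 2) y, ?_, hz, min_le_right _ _⟩
  refine Matrix.mem_of_hasDerivAt_eq_mulVec_add hclosed hconvex hcone (hinvK _ (hu t))
    (haff _ (hu t)) hz (fun s hs => ?_) htK
  have hus : u s = u t := hconst s ⟨hs.1, by linarith [hs.2, min_le_left (t + ε / 2) y]⟩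
  simpa [hus, add_assoc] using hφ s
end
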